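/- Let X be a measurable space and S a standard Borel space, let μ be a probability measure on X, let κ be a Markov kernel from X to S, and let ν = μ.bind κ be the mixture marginal of κ under μ (so ν(A) = ∫ κ(x)(A) dμ(x)). Then for every probability measure r on S, ∫ KL(κ(x) ‖ r) dμ(x) = ∫ KL(κ(x) ‖ ν) dμ(x) + KL(ν ‖ r), as an identity in [0,∞]. In particular, the expected KL divergence of the encoder κ to any fixed variational prior r decomposes as the mutual-information term plus the approximation error KL(ν ‖ r). -/

import Mathlib

/-!
Once `κ x ≪ ν ≪ r` with `ν = μ.bind κ`, the log-likelihood ratios satisfy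
`llr (κ x) r = llr (κ x) ν + llr ν r`, so `KL(κ x ‖ r) = KL(κ x ‖ ν) + ∫ llr ν r d(κ x)`, and
integrating over `μ` turns the last term into `∫ llr ν r dν = KL(ν ‖ r)`. To avoid all
integrability side conditions the computation is done in `ℝ≥0∞` with the positive and negative
parts of the log-likelihood ratios: for probability measures the negative part of `llr p q` has
`p`-integral at most `1`, so it can always be cancelled.

Absolute continuity comes for free: if `∫ KL(κ x ‖ r) dμ < ∞` then `κ x ≪ r` for a.e. `x`, hence
`ν ≪ r`, and `κ x ≪ ν` for a.e. `x` because `κ x` is a.e. carried by a `ν`-full set on which the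
singular part of `r` with respect to `ν` vanishes. If it is infinite, the same argument shows that
the right-hand side is infinite too.
-/

open MeasureTheory ProbabilityTheory
open scoped ENNReal NNReal

open scoped Classical in
noncomputable def klDiv {α : Type*} [MeasurableSpace α] (μ ν : Measure α) : ℝ≥0∞ :=
  if μ ≪ ν ∧ Integrable (llr μ ν) μ then ENNReal.ofReal (∫ x, llr μ ν x ∂μ) else ⊤

theorem klDiv_eq_informationTheory_klDiv {α : Type*} [MeasurableSpace α] {μ ν : Measure α}
    (h : μ Set.univ = ν Set.univ) : klDiv μ ν = InformationTheory.klDiv μ ν := by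
  rw [klDiv, InformationTheory.klDiv_def, measureReal_def, measureReal_def, h,
    add_sub_cancel_right]

lemma ENNReal.ofReal_add_add_ofReal_neg_add_ofReal_neg (a b : ℝ) :
    ENNReal.ofReal (a + b) + (ENNReal.ofReal (-a) + ENNReal.ofReal (-b))
      = ENNReal.ofReal a + (ENNReal.ofReal b + ENNReal.ofReal (-(a + b))) := by
  refine (ENNReal.toReal_eq_toReal_iff' (by finiteness) (by finiteness)).1 ?_
  simp only [ENNReal.toReal_add, ENNReal.add_ne_top, ENNReal.ofReal_ne_top, ne_eq,
    not_false_eq_true, and_self, ENNReal.toReal_ofReal']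
  linarith [max_zero_sub_eq_self a, max_zero_sub_eq_self b, max_zero_sub_eq_self (a + b)]

namespace MeasureTheory

variable {α : Type*} [MeasurableSpace α]

lemma integrable_of_lintegral_ofReal_ne_top {μ : Measure α} {f : α → ℝ}
    (hf : AEStronglyMeasurable f μ) (hpos : ∫⁻ x, ENNReal.ofReal (f x) ∂μ ≠ ∞)
    (hneg : ∫⁻ x, ENNReal.ofReal (-f x) ∂μ ≠ ∞) : Integrable f μ := by
  refine ⟨hf, ?_⟩
  calc ∫⁻ x, ‖f x‖ₑ ∂μ ≤ ∫⁻ x, ENNReal.ofReal (f x) + ENNReal.ofReal (-f x) ∂μ := by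
        refine lintegral_mono fun x => ?_
        rw [Real.enorm_eq_ofReal_abs, abs_eq_max_neg, ENNReal.ofReal_max]
        exact max_le le_self_add le_add_self
    _ = ∫⁻ x, ENNReal.ofReal (f x) ∂μ + ∫⁻ x, ENNReal.ofReal (-f x) ∂μ :=
        lintegral_add_left' hf.aemeasurable.ennreal_ofReal _
    _ < ∞ := ENNReal.add_lt_top.2 ⟨hpos.lt_top, hneg.lt_top⟩

lemma Measure.AbsolutelyContinuous.of_mutuallySingular_singularPart {μ ν ρ : Measure α}
    [ρ.HaveLebesgueDecomposition ν] (h : μ ≪ ρ) (hs : μ ⟂ₘ ρ.singularPart ν) : μ ≪ ν := by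
  rw [Measure.haveLebesgueDecomposition_add ρ ν, add_comm] at h
  exact (Measure.absolutelyContinuous_of_add_of_mutuallySingular h hs).trans
    (withDensity_absolutelyContinuous _ _)

lemma Measure.ae_mutuallySingular_of_mutuallySingular_comp {β : Type*} [MeasurableSpace β]
    {μ : Measure α} {κ : Kernel α β} {ρ : Measure β} (h : ρ ⟂ₘ κ ∘ₘ μ) :
    ∀ᵐ a ∂μ, ρ ⟂ₘ κ a := by
  obtain ⟨s, hs, hρs, hκs⟩ := h
  filter_upwards [Measure.ae_ae_of_ae_comp (mem_ae_iff.2 hκs)] with a ha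
  exact ⟨s, hs, hρs, mem_ae_iff.1 ha⟩

end MeasureTheory

namespace InformationTheory

section Measure

variable {α : Type*} [MeasurableSpace α] {μ ν ξ : Measure α}

lemma lintegral_ofReal_neg_llr_le [SigmaFinite μ] [SigmaFinite ν] (hμν : μ ≪ ν) :
    ∫⁻ x, ENNReal.ofReal (-llr μ ν x) ∂μ ≤ ν Set.univ := by
  calc ∫⁻ x, ENNReal.ofReal (-llr μ ν x) ∂μ
      ≤ ∫⁻ x, ν.rnDeriv μ x ∂μ := by
        refine lintegral_mono_ae ?_
        filter_upwards [exp_neg_llr hμν] with x hx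
        calc ENNReal.ofReal (-llr μ ν x)
            ≤ ENNReal.ofReal (Real.exp (-llr μ ν x)) :=
              ENNReal.ofReal_le_ofReal ((le_add_of_nonneg_right zero_le_one).trans
                (Real.add_one_le_exp _))
          _ ≤ ν.rnDeriv μ x := hx ▸ ENNReal.ofReal_toReal_le
    _ ≤ ν Set.univ := Measure.lintegral_rnDeriv_le

lemma lintegral_ofReal_neg_llr_ne_top [SigmaFinite μ] [IsFiniteMeasure ν] (hμν : μ ≪ ν) :
    ∫⁻ x, ENNReal.ofReal (-llr μ ν x) ∂μ ≠ ∞ :=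
  ((lintegral_ofReal_neg_llr_le hμν).trans_lt (measure_lt_top ν _)).ne

lemma klDiv_add_lintegral_ofReal_neg_llr_eq_lintegral_ofReal_llr [IsProbabilityMeasure μ]
    [IsProbabilityMeasure ν] (hμν : μ ≪ ν) :
    klDiv μ ν + ∫⁻ x, ENNReal.ofReal (-llr μ ν x) ∂μ = ∫⁻ x, ENNReal.ofReal (llr μ ν x) ∂μ := by
  have hneg := lintegral_ofReal_neg_llr_ne_top hμν
  by_cases hint : Integrable (llr μ ν) μ
  · have hpos := hint.lintegral_lt_top.ne
    have hllr := integral_eq_lintegral_pos_part_sub_lintegral_neg_part hint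
    have hgibbs := integral_llr_add_sub_measure_univ_nonneg hμν hint
    rw [probReal_univ, probReal_univ, add_sub_cancel_right, hllr, sub_nonneg,
      ENNReal.toReal_le_toReal hneg hpos] at hgibbs
    rw [klDiv_of_ac_of_integrable hμν hint, probReal_univ, probReal_univ, add_sub_cancel_right,
      hllr, ← ENNReal.toReal_sub_of_le hgibbs hpos, ENNReal.ofReal_toReal (ENNReal.sub_ne_top hpos),
      tsub_add_cancel_of_le hgibbs]
  · have hpos : ∫⁻ x, ENNReal.ofReal (llr μ ν x) ∂μ = ∞ := by
      by_contra h
      exact hint (integrable_of_lintegral_ofReal_ne_top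
        (measurable_llr μ ν).aestronglyMeasurable h hneg)
    rw [klDiv_of_not_integrable hint, hpos, top_add]

lemma llr_ae_eq_llr_add_llr [SigmaFinite μ] [SigmaFinite ν] [SigmaFinite ξ]
    (hμν : μ ≪ ν) (hνξ : ν ≪ ξ) : llr μ ξ =ᵐ[μ] llr μ ν + llr ν ξ := by
  have hμξ : μ ≪ ξ := hμν.trans hνξ
  filter_upwards [hμξ.ae_le (Measure.rnDeriv_mul_rnDeriv hμν),
    Measure.rnDeriv_pos hμν, hμν.ae_le (Measure.rnDeriv_lt_top μ ν),
    hμν.ae_le (Measure.rnDeriv_pos hνξ), hμξ.ae_le (Measure.rnDeriv_lt_top ν ξ)]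
    with x hx h1 h2 h3 h4
  rw [Pi.add_apply, llr, llr, llr, ← hx, Pi.mul_apply, ENNReal.toReal_mul, Real.log_mul]
  · exact (ENNReal.toReal_pos h1.ne' h2.ne).ne'
  · exact (ENNReal.toReal_pos h3.ne' h4.ne).ne'

lemma klDiv_add_lintegral_ofReal_neg_llr_eq_klDiv_add_lintegral_ofReal_llr
    [IsProbabilityMeasure μ] [IsProbabilityMeasure ν] [IsProbabilityMeasure ξ]
    (hμν : μ ≪ ν) (hνξ : ν ≪ ξ) :
    klDiv μ ξ + ∫⁻ x, ENNReal.ofReal (-llr ν ξ x) ∂μ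
      = klDiv μ ν + ∫⁻ x, ENNReal.ofReal (llr ν ξ x) ∂μ := by
  have hpos (ρ ρ' : Measure α) : Measurable fun x => ENNReal.ofReal (llr ρ ρ' x) :=
    (measurable_llr ρ ρ').ennreal_ofReal
  have hneg (ρ ρ' : Measure α) : Measurable fun x => ENNReal.ofReal (-llr ρ ρ' x) :=
    (measurable_llr ρ ρ').neg.ennreal_ofReal
  have hsplit : ∫⁻ x, ENNReal.ofReal (llr μ ξ x) ∂μ + (∫⁻ x, ENNReal.ofReal (-llr μ ν x) ∂μ
        + ∫⁻ x, ENNReal.ofReal (-llr ν ξ x) ∂μ)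
      = ∫⁻ x, ENNReal.ofReal (llr μ ν x) ∂μ + (∫⁻ x, ENNReal.ofReal (llr ν ξ x) ∂μ
        + ∫⁻ x, ENNReal.ofReal (-llr μ ξ x) ∂μ) := by
    rw [← lintegral_add_left (hneg _ _), ← lintegral_add_left (hpos _ _),
      ← lintegral_add_left (hpos _ _), ← lintegral_add_left (hpos _ _)]
    refine lintegral_congr_ae ?_
    filter_upwards [llr_ae_eq_llr_add_llr hμν hνξ] with x hx
    rw [hx]
    exact ENNReal.ofReal_add_add_ofReal_neg_add_ofReal_neg _ _
  rw [← klDiv_add_lintegral_ofReal_neg_llr_eq_lintegral_ofReal_llr (hμν.trans hνξ),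
    ← klDiv_add_lintegral_ofReal_neg_llr_eq_lintegral_ofReal_llr hμν] at hsplit
  have hfin : ∫⁻ x, ENNReal.ofReal (-llr μ ξ x) ∂μ + ∫⁻ x, ENNReal.ofReal (-llr μ ν x) ∂μ ≠ ∞ :=
    ENNReal.add_ne_top.2 ⟨lintegral_ofReal_neg_llr_ne_top (hμν.trans hνξ),
      lintegral_ofReal_neg_llr_ne_top hμν⟩
  rw [← ENNReal.add_left_inj hfin]
  convert hsplit using 1 <;> ring

end Measure

section Kernel

variable {α β : Type*} [MeasurableSpace α] [MeasurableSpace β]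

lemma measurable_klDiv_left [MeasurableSpace.CountablyGenerated β] (κ : Kernel α β)
    [IsFiniteKernel κ] (ν : Measure β) [IsFiniteMeasure ν] :
    Measurable fun a => klDiv (κ a) ν := by
  classical
  simp_rw [klDiv_eq_lintegral_klFun]
  refine Measurable.ite ?_ ?_ measurable_const
  · simpa using Kernel.measurableSet_absolutelyContinuous κ (Kernel.const α ν)
  · have hF : Measurable fun p : α × β =>
        ENNReal.ofReal (klFun (κ.rnDeriv (Kernel.const α ν) p.1 p.2).toReal) :=
      (measurable_klFun.comp (Kernel.measurable_rnDeriv _ _).ennreal_toReal).ennreal_ofReal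
    convert hF.lintegral_prod_right' (ν := ν) using 2 with a
    refine lintegral_congr_ae ?_
    filter_upwards [Kernel.rnDeriv_eq_rnDeriv_measure (κ := κ) (η := Kernel.const α ν) (a := a)]
      with b hb
    simp [hb]

lemma ae_absolutelyContinuous_of_lintegral_klDiv_ne_top [MeasurableSpace.CountablyGenerated β]
    {μ : Measure α} {κ : Kernel α β} [IsFiniteKernel κ] {ν : Measure β} [IsFiniteMeasure ν]
    (h : ∫⁻ a, klDiv (κ a) ν ∂μ ≠ ∞) : ∀ᵐ a ∂μ, κ a ≪ ν :=
  (ae_lt_top (measurable_klDiv_left κ ν) h).mono fun _ ha => (klDiv_ne_top_iff.1 ha.ne).1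

theorem lintegral_klDiv_eq_lintegral_klDiv_comp_add_klDiv_of_absolutelyContinuous
    (μ : Measure α) [IsProbabilityMeasure μ] (κ : Kernel α β) [IsMarkovKernel κ]
    (ξ : Measure β) [IsProbabilityMeasure ξ] (hκ : ∀ᵐ a ∂μ, κ a ≪ κ ∘ₘ μ) (hξ : κ ∘ₘ μ ≪ ξ) :
    ∫⁻ a, klDiv (κ a) ξ ∂μ = ∫⁻ a, klDiv (κ a) (κ ∘ₘ μ) ∂μ + klDiv (κ ∘ₘ μ) ξ := by
  have hpos : Measurable fun b => ENNReal.ofReal (llr (κ ∘ₘ μ) ξ b) :=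
    (measurable_llr _ _).ennreal_ofReal
  have hneg : Measurable fun b => ENNReal.ofReal (-llr (κ ∘ₘ μ) ξ b) :=
    (measurable_llr _ _).neg.ennreal_ofReal
  have h := lintegral_congr_ae (hκ.mono fun a ha =>
    klDiv_add_lintegral_ofReal_neg_llr_eq_klDiv_add_lintegral_ofReal_llr ha hξ)
  rw [lintegral_add_right _ hneg.lintegral_kernel, lintegral_add_right _ hpos.lintegral_kernel,
    ← Measure.lintegral_bind κ.aemeasurable hneg.aemeasurable,
    ← Measure.lintegral_bind κ.aemeasurable hpos.aemeasurable,
    ← klDiv_add_lintegral_ofReal_neg_llr_eq_lintegral_ofReal_llr hξ, ← add_assoc] at h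
  exact (ENNReal.add_left_inj (lintegral_ofReal_neg_llr_ne_top hξ)).1 h

end Kernel

end InformationTheory

/-- Compensation identity: the expected KL divergence of an encoder kernel to any fixed
prior `r` equals the mutual-information term plus `KL(ν ‖ r)` where `ν = μ.bind κ` is the
mixture marginal. -/
theorem lintegral_klDiv_eq_lintegral_klDiv_bind_add_klDiv
    {X S : Type*} [MeasurableSpace X] [MeasurableSpace S] [StandardBorelSpace S]
    (μ : Measure X) [IsProbabilityMeasure μ]
    (κ : Kernel X S) [IsMarkovKernel κ]
    (r : Measure S) [IsProbabilityMeasure r] :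
    ∫⁻ x, klDiv (κ x) r ∂μ
      = ∫⁻ x, klDiv (κ x) (μ.bind ⇑κ) ∂μ + klDiv (μ.bind ⇑κ) r := by
  simp only [klDiv_eq_informationTheory_klDiv, measure_univ]
  by_cases hr : ∀ᵐ x ∂μ, κ x ≪ r
  · have hνr : κ ∘ₘ μ ≪ r := by
      simpa using Measure.AbsolutelyContinuous.comp_left μ (η := Kernel.const X r) hr
    refine
      InformationTheory.lintegral_klDiv_eq_lintegral_klDiv_comp_add_klDiv_of_absolutelyContinuous
        μ κ r ?_ hνr
    filter_upwards [hr, Measure.ae_mutuallySingular_of_mutuallySingular_comp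
      (r.mutuallySingular_singularPart (κ ∘ₘ μ))] with x hxr hxs
    exact hxr.of_mutuallySingular_singularPart hxs.symm
  · have hL : ∫⁻ x, InformationTheory.klDiv (κ x) r ∂μ = ∞ := by
      by_contra h
      exact hr (InformationTheory.ae_absolutelyContinuous_of_lintegral_klDiv_ne_top h)
    rw [hL, eq_comm, ENNReal.add_eq_top]
    by_contra! h
    refine hr ?_
    filter_upwards [InformationTheory.ae_absolutelyContinuous_of_lintegral_klDiv_ne_top h.1]
      with x hx using hx.trans (InformationTheory.klDiv_ne_top_iff.1 h.2).1
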